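/- For all natural numbers n, m, every real number a, and every i with 0 ≤ i ≤ n+m, the linearization coefficient admits the double-sum expression β_i^{(n,m)}(a) = Σ_{k=i}^{n+m} δ_i^{(k)} Σ_{j=0}^{k} α_j^{(n)} α_{k−j}^{(m)} a^j (1−a)^{k−j}, where α_j^{(n)} = (n! (2n−j)! 2^j)/((2n)! (n−j)! j!) for 0 ≤ j ≤ n and α_j^{(n)} = 0 for j > n, and where δ_i^{(k)} = ((k+1)!/2^k) · (−1)^{k−i} (2i)! / ((k−i)! · i! · (2i+1−k)!) if (k−1)/2 ≤ i ≤ k and δ_i^{(k)} = 0 otherwise. -/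

import Mathlib

open Finset

/-- The Bessel polynomial `q_n`, normalized so that `q_n(0) = 1`. -/
noncomputable def besselQ (n : ℕ) (u : ℝ) : ℝ :=
  ∑ k ∈ Finset.range (n + 1),
    ((n.factorial : ℝ) * (2 * n - k).factorial * 2 ^ k) /
      ((2 * n).factorial * (n - k).factorial * k.factorial) * u ^ k

/-- The Pochhammer symbol `(x)_j = x (x+1) ⋯ (x+j-1)`. -/
noncomputable def poch (x : ℝ) (j : ℕ) : ℝ := ∏ i ∈ Finset.range j, (x + i)

/-- Generalized binomial coefficient with integer (possibly negative) upper entry. -/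
noncomputable def gbinom (z : ℤ) (j : ℕ) : ℝ :=
  (∏ i ∈ Finset.range j, ((z : ℝ) - i)) / j.factorial

/-- The coefficients `α_j^{(n)}` of the Bessel polynomial `q_n`, extended by zero for `j > n`. -/
noncomputable def besselCoeff (n j : ℕ) : ℝ :=
  if j ≤ n then
    ((n.factorial : ℝ) * (2 * n - j).factorial * 2 ^ j) /
      ((2 * n).factorial * (n - j).factorial * j.factorial)
  else 0

/-- The Carlitz connection coefficients `δ_i^{(k)}`. -/
noncomputable def carlitzDelta (i k : ℕ) : ℝ :=
  if i ≤ k ∧ k ≤ 2 * i + 1 then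
    ((k + 1).factorial / 2 ^ k : ℝ) *
      ((-1 : ℝ) ^ (k - i) * (2 * i).factorial /
        ((k - i).factorial * i.factorial * (2 * i + 1 - k).factorial))
  else 0

/-!
The Bessel polynomials satisfy the three-term recurrence `u² q_i = (2i+1)(2i+3) (q_{i+2} - q_{i+1})`,
and the Carlitz coefficients satisfy the matching recurrence in `(i, k)`; together they give
Carlitz's inversion `u^k = ∑_{i ≤ k} δ_i^{(k)} q_i` by induction on `k`. The inner sum of the
theorem is the coefficient of `u^k` in `q_n(a u) q_m((1-a) u)`, so expanding this product first in
monomials and then each monomial in Bessel polynomials expresses it in the `q_i`. Since `q_i` has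
degree `i`, the `q_i` are linearly independent, and the coefficients must be the `β_i`.
-/

lemma besselCoeff_of_lt {n j : ℕ} (h : n < j) : besselCoeff n j = 0 := by
  simp [besselCoeff, h.not_ge]

lemma besselCoeff_pos {n j : ℕ} (h : j ≤ n) : 0 < besselCoeff n j := by
  rw [besselCoeff, if_pos h]
  positivity

lemma besselCoeff_zero (n : ℕ) : besselCoeff n 0 = 1 := by
  simp [besselCoeff, mul_comm, Nat.factorial_ne_zero]

lemma besselCoeff_succ_one (n : ℕ) : besselCoeff (n + 1) 1 = 1 := by
  rw [besselCoeff, if_pos (by omega), show 2 * (n + 1) = 2 * n + 1 + 1 by ring,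
    Nat.add_sub_cancel, Nat.add_sub_cancel]
  simp only [Nat.factorial_succ]
  push_cast
  field_simp
  ring

lemma besselCoeff_add_two_add_two (n j : ℕ) :
    ((2 * n + 1) * (2 * n + 3) * (j + 1) * (j + 2) : ℝ) * besselCoeff (n + 2) (j + 2) =
      (2 * n - j + 1) * (2 * n - j + 2) * besselCoeff n j := by
  rcases lt_or_ge n j with h | h
  · rw [besselCoeff_of_lt h, besselCoeff_of_lt (by omega), mul_zero, mul_zero]
  obtain ⟨d, rfl⟩ := Nat.exists_eq_add_of_le h
  rw [besselCoeff, besselCoeff, if_pos (by omega), if_pos h,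
    show j + d + 2 - (j + 2) = d by omega, show 2 * (j + d + 2) - (j + 2) = j + 2 * d + 2 by omega,
    show 2 * (j + d + 2) = 2 * (j + d) + 4 by ring,
    show j + d - j = d by omega, show 2 * (j + d) - j = j + 2 * d by omega]
  simp only [Nat.factorial_succ]
  push_cast
  field_simp
  ring

lemma besselCoeff_succ_add_two (n j : ℕ) :
    ((2 * n + 1) * (j + 1) * (j + 2) : ℝ) * besselCoeff (n + 1) (j + 2) =
      2 * (n - j) * besselCoeff n j := by
  obtain h | rfl | ⟨d, rfl⟩ : n < j ∨ n = j ∨ ∃ d, n = j + d + 1 :=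
    (lt_trichotomy n j).imp_right (Or.imp_right fun h => ⟨n - j - 1, by omega⟩)
  · rw [besselCoeff_of_lt h, besselCoeff_of_lt (by omega), mul_zero, mul_zero]
  · rw [besselCoeff_of_lt (by omega)]
    ring
  rw [besselCoeff, besselCoeff, if_pos (by omega), if_pos (by omega),
    show j + d + 1 + 1 - (j + 2) = d by omega, show j + d + 1 - j = d + 1 by omega,
    show 2 * (j + d + 1 + 1) - (j + 2) = j + 2 * d + 2 by omega,
    show 2 * (j + d + 1) - j = j + 2 * d + 2 by omega,
    show 2 * (j + d + 1 + 1) = 2 * (j + d) + 4 by ring,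
    show 2 * (j + d + 1) = 2 * (j + d) + 2 by ring]
  simp only [Nat.factorial_succ]
  push_cast
  field_simp
  ring

lemma besselCoeff_recurrence (n j : ℕ) :
    besselCoeff n j =
      (2 * n + 1) * (2 * n + 3) * (besselCoeff (n + 2) (j + 2) - besselCoeff (n + 1) (j + 2)) := by
  have hj : ((j + 1) * (j + 2) : ℝ) ≠ 0 := by positivity
  refine mul_left_cancel₀ hj ?_
  linear_combination (2 * n + 3 : ℝ) * besselCoeff_succ_add_two n j -
    besselCoeff_add_two_add_two n j

lemma carlitzDelta_eq_zero {i k : ℕ} (h : k < i ∨ 2 * i + 1 < k) : carlitzDelta i k = 0 := by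
  rw [carlitzDelta, if_neg (by omega)]

lemma carlitzDelta_mul_eq (i k : ℕ) :
    ((k + 2) * (k + 3) * (2 * i + 1) * (2 * i + 3) : ℝ) * carlitzDelta i k =
      (2 * i + 3 - k) * (2 * i + 2 - k) * carlitzDelta (i + 2) (k + 2) := by
  by_cases hs : i ≤ k ∧ k ≤ 2 * i + 1
  · rw [carlitzDelta, carlitzDelta, if_pos hs, if_pos (by omega),
      Nat.add_sub_add_right, show 2 * (i + 2) + 1 - (k + 2) = 2 * i + 1 - k + 2 by omega,
      show 2 * (i + 2) = 2 * i + 4 by ring]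
    -- `2 * i + 1 - k` stays a cast natural, so that `field_simp` sees the factors are nonzero
    have hc : ((2 * i + 1 - k : ℕ) : ℝ) = 2 * i + 1 - k := by push_cast [Nat.cast_sub hs.2]; ring
    rw [show (2 * i + 3 - k : ℝ) * (2 * i + 2 - k) =
      (((2 * i + 1 - k : ℕ) : ℝ) + 2) * (((2 * i + 1 - k : ℕ) : ℝ) + 1) by rw [hc]; ring]
    simp only [Nat.factorial_succ]
    push_cast
    field_simp
    ring
  rw [carlitzDelta_eq_zero (by omega), mul_zero]
  obtain h | h | rfl | rfl : k < i ∨ 2 * i + 3 < k ∨ k = 2 * i + 2 ∨ k = 2 * i + 3 := by omega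
  · rw [carlitzDelta_eq_zero (by omega), mul_zero]
  · rw [carlitzDelta_eq_zero (by omega), mul_zero]
  all_goals push_cast; ring

lemma carlitzDelta_succ_mul_eq (i k : ℕ) :
    ((k + 2) * (k + 3) * (2 * i + 3) : ℝ) * carlitzDelta (i + 1) k =
      -2 * (k - i) * carlitzDelta (i + 2) (k + 2) := by
  by_cases hs : i + 1 ≤ k ∧ k ≤ 2 * (i + 1) + 1
  · rw [carlitzDelta, carlitzDelta, if_pos hs, if_pos (by omega),
      show k + 2 - (i + 2) = k - (i + 1) + 1 by omega,
      show 2 * (i + 2) + 1 - (k + 2) = 2 * (i + 1) + 1 - k by omega,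
      show 2 * (i + 2) = 2 * (i + 1) + 2 by ring]
    rw [show (k - i : ℝ) = ((k - (i + 1) : ℕ) : ℝ) + 1 by push_cast [Nat.cast_sub hs.1]; ring]
    simp only [Nat.factorial_succ]
    push_cast
    field_simp
    ring
  rw [carlitzDelta_eq_zero (by omega), mul_zero]
  obtain h | h | rfl : k < i ∨ 2 * i + 3 < k ∨ k = i := by omega
  · rw [carlitzDelta_eq_zero (by omega), mul_zero]
  · rw [carlitzDelta_eq_zero (by omega), mul_zero]
  · ring

lemma carlitzDelta_recurrence (i k : ℕ) :
    carlitzDelta (i + 2) (k + 2) =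
      (2 * i + 1) * (2 * i + 3) * carlitzDelta i k -
        (2 * i + 3) * (2 * i + 5) * carlitzDelta (i + 1) k := by
  have hk : ((k + 2) * (k + 3) : ℝ) ≠ 0 := by positivity
  refine mul_left_cancel₀ hk ?_
  linear_combination (2 * i + 5 : ℝ) * carlitzDelta_succ_mul_eq i k - carlitzDelta_mul_eq i k

lemma carlitzDelta_one_add_two (k : ℕ) : carlitzDelta 1 (k + 2) = -3 * carlitzDelta 0 k := by
  match k with
  | 0 => norm_num [carlitzDelta, Nat.factorial]
  | 1 => norm_num [carlitzDelta, Nat.factorial]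
  | k + 2 => rw [carlitzDelta_eq_zero (by omega), carlitzDelta_eq_zero (by omega), mul_zero]

open Polynomial

noncomputable def besselPoly (n : ℕ) : ℝ[X] :=
  ∑ k ∈ range (n + 1), C (besselCoeff n k) * X ^ k

@[simp]
lemma coeff_besselPoly (n j : ℕ) : (besselPoly n).coeff j = besselCoeff n j := by
  simp only [besselPoly, finsetSum_coeff, coeff_C_mul_X_pow, sum_ite_eq, mem_range]
  split_ifs with h
  · rfl
  · exact (besselCoeff_of_lt (by omega)).symm

lemma eval_besselPoly (n : ℕ) (u : ℝ) : (besselPoly n).eval u = besselQ n u := by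
  simp only [besselPoly, besselQ, eval_finsetSum, eval_mul, eval_C, eval_pow, eval_X]
  refine sum_congr rfl fun k hk => ?_
  rw [besselCoeff, if_pos (by simpa [Nat.lt_succ_iff] using hk)]

lemma degree_besselPoly (n : ℕ) : (besselPoly n).degree = n := by
  refine degree_eq_of_le_of_coeff_ne_zero ((degree_le_iff_coeff_zero _ _).2 fun j hj => ?_) ?_
  · rw [coeff_besselPoly, besselCoeff_of_lt (by exact_mod_cast hj)]
  · rw [coeff_besselPoly]
    exact (besselCoeff_pos le_rfl).ne'

lemma linearIndependent_besselPoly : LinearIndependent ℝ besselPoly :=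
  (⟨besselPoly, degree_besselPoly⟩ : Polynomial.Sequence ℝ).linearIndependent

lemma X_sq_mul_besselPoly (n : ℕ) :
    X ^ 2 * besselPoly n =
      ((2 * n + 1) * (2 * n + 3) : ℝ) • (besselPoly (n + 2) - besselPoly (n + 1)) := by
  ext j
  rw [coeff_X_pow_mul', coeff_smul, coeff_sub, coeff_besselPoly, coeff_besselPoly, smul_eq_mul]
  match j with
  | 0 | 1 => simp [besselCoeff_zero, besselCoeff_succ_one]
  | j + 2 => simpa using besselCoeff_recurrence n j

lemma X_pow_eq_sum_carlitzDelta_smul_besselPoly (k : ℕ) :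
    (X ^ k : ℝ[X]) = ∑ i ∈ range (k + 1), carlitzDelta i k • besselPoly i := by
  induction k using Nat.twoStepInduction with
  | zero => simp [carlitzDelta, besselPoly, besselCoeff_zero]
  | one =>
    simp [sum_range_succ, carlitzDelta, besselPoly, besselCoeff_zero, besselCoeff_succ_one]
  | more k hk _ =>
    set f : ℕ → ℝ := fun i => (2 * i + 1) * (2 * i + 3) * carlitzDelta i k with hf
    have hX : (X ^ (k + 2) : ℝ[X]) =
        ∑ i ∈ range (k + 1), f i • (besselPoly (i + 2) - besselPoly (i + 1)) := by
      rw [pow_add, mul_comm, hk, mul_sum]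
      refine sum_congr rfl fun i _ => ?_
      rw [mul_smul_comm, X_sq_mul_besselPoly, smul_smul, mul_comm]
    have hδ : ∀ i, carlitzDelta (i + 2) (k + 2) = f i - f (i + 1) := fun i => by
      simp only [hf, carlitzDelta_recurrence]
      push_cast
      ring
    have hf_top : f (k + 1) = 0 := by simp [hf, carlitzDelta_eq_zero]
    have hsplit : ∀ i, f i • (besselPoly (i + 2) - besselPoly (i + 1)) =
        carlitzDelta (i + 2) (k + 2) • besselPoly (i + 2) +
          (f (i + 1) • besselPoly (i + 1 + 1) - f i • besselPoly (i + 1)) := fun i => by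
      rw [hδ, sub_smul, smul_sub]
      abel
    have h0 : carlitzDelta 0 (k + 2) = 0 := carlitzDelta_eq_zero (Or.inr (by omega))
    have h1 : carlitzDelta 1 (k + 2) = -f 0 := by simp [carlitzDelta_one_add_two, hf]
    rw [hX, sum_congr rfl fun i _ => hsplit i, sum_add_distrib,
      sum_range_sub (fun i => f i • besselPoly (i + 1)), hf_top,
      sum_range_succ' _ (k + 2), sum_range_succ' _ (k + 1), h0, h1]
    simp only [zero_smul, add_zero, neg_smul, zero_add]
    abel

lemma natDegree_besselPoly_comp_C_mul_X_le (n : ℕ) (c : ℝ) :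
    ((besselPoly n).comp (C c * X)).natDegree ≤ n :=
  natDegree_le_iff_coeff_eq_zero.2 fun j hj => by
    rw [comp_C_mul_X_coeff, coeff_besselPoly, besselCoeff_of_lt (by exact_mod_cast hj), zero_mul]

lemma eq_sum_besselPoly_of_natDegree_le {p : ℝ[X]} {N : ℕ} (hp : p.natDegree ≤ N) :
    p = ∑ i ∈ range (N + 1), (∑ k ∈ Icc i N, carlitzDelta i k * p.coeff k) • besselPoly i := by
  calc p = ∑ k ∈ range (N + 1), p.coeff k • (X ^ k : ℝ[X]) := by
        simp_rw [smul_X_eq_monomial]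
        exact as_sum_range' p (N + 1) (by omega)
    _ = ∑ k ∈ range (N + 1), ∑ i ∈ range (k + 1),
          (carlitzDelta i k * p.coeff k) • besselPoly i := by
        refine sum_congr rfl fun k _ => ?_
        simp_rw [X_pow_eq_sum_carlitzDelta_smul_besselPoly k, smul_sum, smul_smul, mul_comm]
    _ = _ := by
        simp_rw [sum_smul]
        exact sum_comm' fun k i => by simp only [mem_range, mem_Icc]; omega

theorem bessel_linearization_double_sum
    (n m : ℕ) (a : ℝ) (β : ℕ → ℝ)
    (hβ : ∀ u : ℝ, besselQ n (a * u) * besselQ m ((1 - a) * u) =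
      ∑ k ∈ Finset.range (n + m + 1), β k * besselQ k u)
    (i : ℕ) (hi : i ≤ n + m) :
    β i = ∑ k ∈ Finset.Icc i (n + m), carlitzDelta i k *
      ∑ j ∈ Finset.range (k + 1),
        besselCoeff n j * besselCoeff m (k - j) * a ^ j * (1 - a) ^ (k - j) := by
  set P : ℝ[X] := (besselPoly n).comp (C a * X) * (besselPoly m).comp (C (1 - a) * X)
  have hP : P = ∑ k ∈ range (n + m + 1), β k • besselPoly k := by
    refine Polynomial.funext fun u => ?_
    simp [P, eval_finsetSum, eval_besselPoly, hβ]
  have hdeg : P.natDegree ≤ n + m := natDegree_mul_le.trans <|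
    add_le_add (natDegree_besselPoly_comp_C_mul_X_le n a)
      (natDegree_besselPoly_comp_C_mul_X_le m (1 - a))
  have hcoeff : ∀ k, P.coeff k = ∑ j ∈ range (k + 1),
      besselCoeff n j * besselCoeff m (k - j) * a ^ j * (1 - a) ^ (k - j) := fun k => by
    rw [coeff_mul, Nat.sum_antidiagonal_eq_sum_range_succ_mk]
    refine sum_congr rfl fun j _ => ?_
    simp only [comp_C_mul_X_coeff, coeff_besselPoly]
    ring
  rw [linearIndependent_iff'ₛ.mp linearIndependent_besselPoly _ β _
    (hP.symm.trans (eq_sum_besselPoly_of_natDegree_le hdeg)) i (mem_range.2 (by omega))]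
  simp only [hcoeff]
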